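/- arXiv:1704.06744 — 3 statements merged into one kernel-verified Lean document; each statement's English description precedes it below -/
import Mathlib

section
/- There exists a constant c(n) > 0, depending only on n, such that for every real κ with 0 < κ < 1/4 and every real K ≥ 1, the n-dimensional Lebesgue measure of the set of ω ∈ [0,2π]^n for which there exist k ∈ ℤ^n with 0 < |k| ≤ K and j ∈ ℤ satisfying |⟨k,ω⟩ + j| < κ(1+|j|) is at most c(n)·K^{n+1}·κ. Equivalently, the complement D' = {ω ∈ [0,2π]^n : |⟨k,ω⟩ + j| ≥ κ(1+|j|) for all j ∈ ℤ and all k ∈ ℤ^n with 0 < |k| ≤ K} satisfies Meas([0,2π]^n \ D') ≤ c(n)K^{n+1}κ. -/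
/-!
A point of the bad set lies in some slab `|⟨k,ω⟩ + j| < κ(1+|j|)` with `0 < |k| ≤ K`. On the cube
`|⟨k,ω⟩| ≤ 2π|k|`, which for `κ < 1/4` leaves only the `O(|k|)` integers `|j| ≤ 9|k|`. Integrating
first in a coordinate `i` with `|k_i| ≥ |k|/n` (Fubini), each slab has measure at most
`(2π)^(n-1) · 2κ(1+|j|)/|k_i| = O(nκ)`. Summing over the `O(K)` values of `j` and the
`O(K^n)` frequencies `k` gives `O(K^(n+1) κ)`.
-/

open MeasureTheory Set

theorem Real.volume_setOf_abs_mul_add_lt {a : ℝ} (ha : a ≠ 0) (c ε : ℝ) :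
    volume {x : ℝ | |a * x + c| < ε} = ENNReal.ofReal (2 * ε / |a|) := by
  have : {x : ℝ | |a * x + c| < ε} = Metric.ball (-c / a) (ε / |a|) := by
    ext x
    have : a * x + c = a * (x - -c / a) := by field_simp; ring
    rw [mem_ofPred_eq, Metric.mem_ball, Real.dist_eq, this, abs_mul,
      lt_div_iff₀ (abs_pos.2 ha), mul_comm]
  rw [this, Real.volume_ball, mul_div_assoc]

theorem volume_cylinder_inter_slab {m : ℕ} (i : Fin (m + 1)) (a b : Fin m → ℝ)
    {k : Fin (m + 1) → ℝ} (hki : k i ≠ 0) (t ε : ℝ) :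
    volume {ω : Fin (m + 1) → ℝ | i.removeNth ω ∈ Icc a b ∧ |∑ l, k l * ω l + t| < ε} =
      volume (Icc a b) * ENNReal.ofReal (2 * ε / |k i|) := by
  set T : Set (ℝ × (Fin m → ℝ)) :=
    {p | p.2 ∈ Icc a b ∧ |k i * p.1 + (∑ l, k (i.succAbove l) * p.2 l + t)| < ε}
  have hT : MeasurableSet T := by
    simp only [T, ofPred_and]
    exact (measurableSet_Icc.preimage measurable_snd).inter
      (measurableSet_lt (by fun_prop) measurable_const)
  have hpre : {ω : Fin (m + 1) → ℝ | i.removeNth ω ∈ Icc a b ∧ |∑ l, k l * ω l + t| < ε} =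
      MeasurableEquiv.piFinSuccAbove (fun _ => ℝ) i ⁻¹' T := by
    ext ω
    simp [T, Fin.sum_univ_succAbove _ i, add_assoc, Fin.removeNth]
  have hslice (y : Fin m → ℝ) : volume ((fun x => (x, y)) ⁻¹' T) =
      (Icc a b).indicator (fun _ => ENNReal.ofReal (2 * ε / |k i|)) y := by
    by_cases hy : y ∈ Icc a b
    · simp only [T, indicator_of_mem hy, preimage_ofPred_eq, hy, true_and]
      exact Real.volume_setOf_abs_mul_add_lt hki _ _
    · simp only [T, indicator_of_notMem hy, preimage_ofPred_eq, hy, false_and, ofPred_false,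
        measure_empty]
  rw [hpre, (volume_preserving_piFinSuccAbove (fun _ => ℝ) i).measure_preimage
    hT.nullMeasurableSet, Measure.volume_eq_prod, Measure.prod_apply_symm hT]
  simp_rw [hslice]
  rw [lintegral_indicator_const measurableSet_Icc, mul_comm]

theorem Int.card_Icc_neg_self {N : ℤ} (hN : 0 ≤ N) :
    ((Finset.Icc (-N) N).card : ℝ) = 2 * N + 1 := by
  rw [← Int.cast_natCast, Int.card_Icc_of_le _ _ (by omega)]
  push_cast
  ring

theorem measure_biUnion_finset_le_ofReal_card_mul {α β : Type*} [MeasurableSpace β]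
    {μ : Measure β} {s : Finset α} {f : α → Set β} {c : ℝ}
    (h : ∀ a ∈ s, μ (f a) ≤ ENNReal.ofReal c) :
    μ (⋃ a ∈ s, f a) ≤ ENNReal.ofReal (s.card * c) := by
  rw [ENNReal.ofReal_mul (Nat.cast_nonneg _), ENNReal.ofReal_natCast, ← nsmul_eq_mul]
  exact (measure_biUnion_finset_le s f).trans (Finset.sum_le_card_nsmul _ _ _ h)

theorem exists_sum_abs_le_card_mul_abs {ι R : Type*} [Fintype ι] [Nonempty ι]
    [CommRing R] [LinearOrder R] [IsStrictOrderedRing R] (k : ι → R) :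
    ∃ i, ∑ l, |k l| ≤ Fintype.card ι * |k i| := by
  obtain ⟨i, -, hi⟩ := Finset.exists_le_of_sum_le Finset.univ_nonempty
    (f := fun _ => ∑ l, |k l|) (g := fun i => Fintype.card ι * |k i|)
    (by simp [← Finset.mul_sum])
  exact ⟨i, hi⟩

theorem abs_sum_mul_le_of_mem_Icc {ι : Type*} [Fintype ι] (k ω : ι → ℝ) {L : ℝ}
    (hω : ω ∈ Icc 0 (fun _ => L)) : |∑ i, k i * ω i| ≤ L * ∑ i, |k i| := by
  rw [Finset.mul_sum]
  refine (Finset.abs_sum_le_sum_abs _ _).trans (Finset.sum_le_sum fun i _ => ?_)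
  rw [abs_mul, abs_of_nonneg (hω.1 i), mul_comm]
  exact mul_le_mul_of_nonneg_right (hω.2 i) (abs_nonneg _)

theorem three_mul_abs_le_of_abs_add_lt {x y κ : ℝ} (hκ : κ ≤ 1 / 4)
    (h : |x + y| < κ * (1 + |y|)) : 3 * |y| ≤ 4 * |x| + 1 := by
  have hy : |y| ≤ |x + y| + |x| := by simpa using abs_sub (x + y) x
  nlinarith [abs_nonneg y]

def resonantSet (n : ℕ) (κ : ℝ) (k : Fin n → ℤ) (j : ℤ) : Set (Fin n → ℝ) :=
  {ω | ω ∈ Icc 0 (fun _ => 2 * Real.pi) ∧ |∑ i, (k i : ℝ) * ω i + j| < κ * (1 + |(j : ℝ)|)}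

theorem abs_le_of_mem_resonantSet {n : ℕ} {κ : ℝ} (hκ : κ ≤ 1 / 4) {k : Fin n → ℤ} {j : ℤ}
    (hk : 1 ≤ ∑ i, |k i|) {ω : Fin n → ℝ} (hω : ω ∈ resonantSet n κ k j) :
    |j| ≤ 9 * ∑ i, |k i| := by
  have h3 := three_mul_abs_le_of_abs_add_lt hκ hω.2
  have hsum := abs_sum_mul_le_of_mem_Icc (fun i => (k i : ℝ)) ω hω.1
  have hk' : (1 : ℝ) ≤ ∑ i, |(k i : ℝ)| := by exact_mod_cast hk
  -- `3|j| ≤ 8π|k| + 1 ≤ 27|k|`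
  have : (|j| : ℝ) ≤ 9 * ∑ i, |(k i : ℝ)| := by nlinarith [Real.pi_lt_d2]
  exact_mod_cast this

theorem volume_resonantSet_le {m : ℕ} (κ : ℝ) {k : Fin (m + 1) → ℤ} (j : ℤ) {i : Fin (m + 1)}
    (hki : k i ≠ 0) :
    volume (resonantSet (m + 1) κ k j) ≤
      ENNReal.ofReal ((2 * Real.pi) ^ m * (2 * (κ * (1 + |(j : ℝ)|)) / |(k i : ℝ)|)) := by
  have hsub : resonantSet (m + 1) κ k j ⊆ {ω | i.removeNth ω ∈ Icc 0 (fun _ => 2 * Real.pi) ∧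
      |∑ l, (k l : ℝ) * ω l + j| < κ * (1 + |(j : ℝ)|)} :=
    fun ω ⟨hω, hres⟩ => ⟨⟨fun l => hω.1 _, fun l => hω.2 _⟩, hres⟩
  refine (measure_mono hsub).trans_eq ?_
  rw [volume_cylinder_inter_slab i _ _ (Int.cast_ne_zero.2 hki), Real.volume_Icc_pi,
    ENNReal.ofReal_mul (by positivity), ENNReal.ofReal_pow Real.two_pi_pos.le]
  simp

theorem volume_biUnion_resonantSet_le {m : ℕ} {κ : ℝ} (hκ : 0 ≤ κ) {k : Fin (m + 1) → ℤ}
    (hk : 1 ≤ ∑ i, |k i|) :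
    volume (⋃ j ∈ Finset.Icc (-(9 * ∑ i, |k i|)) (9 * ∑ i, |k i|), resonantSet (m + 1) κ k j) ≤
      ENNReal.ofReal (19 * ((∑ i, |k i| : ℤ) : ℝ) * (20 * (m + 1) * (2 * Real.pi) ^ m * κ)) := by
  set A : ℤ := ∑ i, |k i|
  obtain ⟨i, hi⟩ := exists_sum_abs_le_card_mul_abs k
  rw [Fintype.card_fin] at hi
  have hki : k i ≠ 0 := by
    rintro h
    simp only [h, abs_zero, mul_zero] at hi
    omega
  have hA : (1 : ℝ) ≤ A := by exact_mod_cast hk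
  have hAi : (A : ℝ) ≤ (m + 1) * |(k i : ℝ)| := by exact_mod_cast hi
  refine (measure_biUnion_finset_le_ofReal_card_mul
    (c := 20 * (m + 1) * (2 * Real.pi) ^ m * κ) fun j hj => ?_).trans
    (ENNReal.ofReal_le_ofReal ?_)
  · refine (volume_resonantSet_le κ j hki).trans (ENNReal.ofReal_le_ofReal ?_)
    have hj : (|j| : ℝ) ≤ 9 * A := by exact_mod_cast abs_le.2 (Finset.mem_Icc.1 hj)
    have hdiv : 2 * (κ * (1 + |(j : ℝ)|)) / |(k i : ℝ)| ≤ 20 * (m + 1) * κ := by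
      rw [div_le_iff₀ (abs_pos.2 (Int.cast_ne_zero.2 hki))]
      nlinarith
    calc (2 * Real.pi) ^ m * (2 * (κ * (1 + |(j : ℝ)|)) / |(k i : ℝ)|)
        ≤ (2 * Real.pi) ^ m * (20 * (m + 1) * κ) := by gcongr
      _ = 20 * (m + 1) * (2 * Real.pi) ^ m * κ := by ring
  · rw [Int.card_Icc_neg_self (by omega)]
    gcongr
    push_cast
    linarith

/-- The coordinate bounds `|k_i| ≤ ⌊K⌋` follow from the filter; they only make the set finite. -/
noncomputable def lowFrequencies (n : ℕ) (K : ℝ) : Finset (Fin n → ℤ) :=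
  (Finset.Icc (fun _ => -⌊K⌋) (fun _ => ⌊K⌋)).filter
    fun k => 0 < ∑ i, |k i| ∧ ((∑ i, |k i| : ℤ) : ℝ) ≤ K

theorem mem_lowFrequencies {n : ℕ} {K : ℝ} {k : Fin n → ℤ} :
    k ∈ lowFrequencies n K ↔ 0 < ∑ i, |k i| ∧ ((∑ i, |k i| : ℤ) : ℝ) ≤ K := by
  refine ⟨fun hk => (Finset.mem_filter.1 hk).2, fun hk => Finset.mem_filter.2 ⟨?_, hk⟩⟩
  have hkK (i : Fin n) : |k i| ≤ ⌊K⌋ := by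
    refine Int.le_floor.2 (le_trans ?_ hk.2)
    exact_mod_cast Finset.single_le_sum (fun l _ => abs_nonneg (k l)) (Finset.mem_univ i)
  exact Finset.mem_Icc.2 ⟨fun i => (abs_le.1 (hkK i)).1, fun i => (abs_le.1 (hkK i)).2⟩

theorem card_lowFrequencies_le (n : ℕ) {K : ℝ} (hK : 1 ≤ K) :
    ((lowFrequencies n K).card : ℝ) ≤ (3 * K) ^ n := by
  have hN : 0 ≤ ⌊K⌋ := Int.floor_nonneg.2 (by linarith)
  calc ((lowFrequencies n K).card : ℝ)
      ≤ (Finset.Icc (fun _ : Fin n => -⌊K⌋) (fun _ => ⌊K⌋)).card := by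
        exact_mod_cast Finset.card_le_card (Finset.filter_subset _ _)
    _ = (2 * ⌊K⌋ + 1) ^ n := by
        rw [Pi.card_Icc, Finset.prod_const, Finset.card_univ, Fintype.card_fin, Nat.cast_pow,
          Int.card_Icc_neg_self hN]
    _ ≤ (3 * K) ^ n := by
        gcongr
        linarith [Int.floor_le K]

/-- (Lemma 3.2 / Hypothesis A2 for the harmonic oscillator.)
There is a constant `c(n) > 0` such that for all `0 < κ < 1/4` and `K ≥ 1`, the Lebesgue
measure of the set of `ω ∈ [0,2π]^n` for which some `k ∈ ℤ^n` with `0 < |k| ≤ K` and some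
`j ∈ ℤ` satisfy `|⟨k,ω⟩ + j| < κ(1+|j|)` is at most `c(n) K^{n+1} κ`. -/
theorem statement0 (n : ℕ) (hn : 1 ≤ n) :
    ∃ c : ℝ, 0 < c ∧ ∀ κ K : ℝ, 0 < κ → κ < 1 / 4 → 1 ≤ K →
      MeasureTheory.volume
        {ω : Fin n → ℝ | ω ∈ Set.Icc 0 (fun _ => 2 * Real.pi) ∧
          ∃ (k : Fin n → ℤ) (j : ℤ),
            0 < ∑ i, |k i| ∧ ((∑ i, |k i| : ℤ) : ℝ) ≤ K ∧
            |∑ i, (k i : ℝ) * ω i + (j : ℝ)| < κ * (1 + |(j : ℝ)|)} ≤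
      ENNReal.ofReal (c * K ^ (n + 1) * κ) := by
  obtain ⟨m, rfl⟩ : ∃ m, n = m + 1 := ⟨n - 1, by omega⟩
  refine ⟨380 * (m + 1) * 3 ^ (m + 1) * (2 * Real.pi) ^ m, by positivity, ?_⟩
  intro κ K hκ hκ4 hK
  have hcover : {ω : Fin (m + 1) → ℝ | ω ∈ Set.Icc 0 (fun _ => 2 * Real.pi) ∧
      ∃ (k : Fin (m + 1) → ℤ) (j : ℤ), 0 < ∑ i, |k i| ∧ ((∑ i, |k i| : ℤ) : ℝ) ≤ K ∧
        |∑ i, (k i : ℝ) * ω i + (j : ℝ)| < κ * (1 + |(j : ℝ)|)} ⊆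
      ⋃ k ∈ lowFrequencies (m + 1) K,
        ⋃ j ∈ Finset.Icc (-(9 * ∑ i, |k i|)) (9 * ∑ i, |k i|), resonantSet (m + 1) κ k j := by
    rintro ω ⟨hω, k, j, hk0, hkK, hres⟩
    have hj := abs_le_of_mem_resonantSet hκ4.le hk0 ⟨hω, hres⟩
    exact mem_biUnion (mem_lowFrequencies.2 ⟨hk0, hkK⟩)
      (mem_biUnion (Finset.mem_Icc.2 (abs_le.1 hj)) ⟨hω, hres⟩)
  calc _ ≤ _ := measure_mono hcover
    _ ≤ ENNReal.ofReal ((lowFrequencies (m + 1) K).card *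
          (19 * K * (20 * (m + 1) * (2 * Real.pi) ^ m * κ))) := by
        refine measure_biUnion_finset_le_ofReal_card_mul fun k hk => ?_
        obtain ⟨hk0, hkK⟩ := mem_lowFrequencies.1 hk
        refine (volume_biUnion_resonantSet_le hκ.le hk0).trans (ENNReal.ofReal_le_ofReal ?_)
        gcongr
    _ ≤ ENNReal.ofReal
          (380 * (m + 1) * 3 ^ (m + 1) * (2 * Real.pi) ^ m * K ^ (m + 1 + 1) * κ) := by
        refine ENNReal.ofReal_le_ofReal ?_
        calc _ ≤ (3 * K) ^ (m + 1) * (19 * K * (20 * (m + 1) * (2 * Real.pi) ^ m * κ)) := by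
              gcongr
              exact card_lowFrequencies_le _ hK
          _ = _ := by ring
end

section
/- Let X be a complex Banach space, n ≥ 1 an integer, 0 < ι < 1, c > 0, and 0 < σ ≤ 1/4; set σ_ν = σ^{(3/2)^ν}. Suppose f₀ = 0 and, for each ν ≥ 1, f_ν : ℂ^n → X is holomorphic on the open strip {z ∈ ℂ^n : |Im z_j| < σ_ν for all j} with sup_{|Im z_j| < σ_ν} ‖f_ν(z) − f_{ν−1}(z)‖_X ≤ c·σ_ν^{ι}. Then the limit f(x) = lim_{ν→∞} f_ν(x) exists for every x ∈ ℝ^n and satisfies: (i) sup_{x∈ℝ^n} ‖f(x)‖_X ≤ (2c/ι)·σ^{ι}, and (ii) ‖f(x) − f(y)‖_X ≤ (4c/(ι(1−ι)))·|x−y|^{ι} for all x, y ∈ ℝ^n with 0 < |x−y| ≤ 1 (Euclidean norm on ℝ^n). -/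
/-!
The differences `f_{ν+1} - f_ν` are summed on `ℝⁿ`. Since `σ_{ν+1} = σ_ν ^ (3/2) ≤ σ_ν / 2`,
the widths decay at least geometrically, and Bernoulli's inequality `2^{-p} ≤ 1 - p/2` turns
every geometric sum `∑ σ_ν^p` (`0 < p ≤ 1`) into at most `2/p` times its largest term; this
gives the sup bound. For the Hölder bound at distance `t`, the Schwarz lemma on the complex
line through `x` and `y` bounds the `ν`-th difference by `2cσ_ν^{ι-1}t` while `σ_ν ≥ t`, and the
trivial bound `2cσ_ν^ι` is used once `σ_ν < t`; the two sums contribute `4ct^ι/(1-ι)` and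
`4ct^ι/ι`.
-/

open Metric Set

section GeometricDecay

variable {b : ℕ → ℝ} {r : ℝ}

theorem le_pow_mul_of_succ_le_mul (hr0 : 0 ≤ r) (hstep : ∀ i, b (i + 1) ≤ r * b i) (m k : ℕ) :
    b (k + m) ≤ r ^ k * b m := by
  simpa using le_geom (u := fun k => b (k + m)) hr0 k fun i _ => by
    simpa only [add_right_comm i 1 m] using hstep (i + m)

theorem summable_of_succ_le_mul (hb : ∀ i, 0 ≤ b i) (hr0 : 0 ≤ r) (hr1 : r < 1)
    (hstep : ∀ i, b (i + 1) ≤ r * b i) : Summable b :=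
  .of_nonneg_of_le hb (fun k => le_pow_mul_of_succ_le_mul hr0 hstep 0 k)
    ((summable_geometric_of_lt_one hr0 hr1).mul_right (b 0))

theorem tsum_add_le_div_of_succ_le_mul (hb : ∀ i, 0 ≤ b i) (hr0 : 0 ≤ r) (hr1 : r < 1)
    (hstep : ∀ i, b (i + 1) ≤ r * b i) (m : ℕ) : ∑' k, b (k + m) ≤ b m / (1 - r) := by
  have hgeom := (summable_geometric_of_lt_one hr0 hr1).mul_right (b m)
  calc ∑' k, b (k + m) ≤ ∑' k, r ^ k * b m :=
        Summable.tsum_le_tsum (le_pow_mul_of_succ_le_mul hr0 hstep m)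
          ((summable_nat_add_iff m).2 (summable_of_succ_le_mul hb hr0 hr1 hstep)) hgeom
    _ = b m / (1 - r) := by
        rw [tsum_mul_right, tsum_geometric_of_lt_one hr0 hr1, inv_mul_eq_div]

theorem sum_range_succ_inv_le_div_of_succ_le_mul (hb : ∀ i, 0 < b i) (hr0 : 0 ≤ r) (hr1 : r < 1)
    (hstep : ∀ i, b (i + 1) ≤ r * b i) (N : ℕ) :
    ∑ i ∈ Finset.range (N + 1), (b i)⁻¹ ≤ (b N)⁻¹ / (1 - r) := by
  have h1r : 0 < 1 - r := sub_pos.2 hr1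
  induction N with
  | zero =>
    simpa using le_div_self (inv_nonneg.2 (hb 0).le) h1r (by linarith)
  | succ N ih =>
    have hinv : (b N)⁻¹ ≤ r * (b (N + 1))⁻¹ := by
      rw [← div_eq_mul_inv, le_div_iff₀ (hb _), inv_mul_le_iff₀ (hb _), mul_comm]
      exact hstep N
    rw [Finset.sum_range_succ]
    calc ∑ i ∈ Finset.range (N + 1), (b i)⁻¹ + (b (N + 1))⁻¹
        ≤ r * (b (N + 1))⁻¹ / (1 - r) + (b (N + 1))⁻¹ := by gcongr; exact ih.trans (by gcongr)
      _ = (b (N + 1))⁻¹ / (1 - r) := by field_simp; ring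

theorem sum_range_inv_le_div_of_le (hb : ∀ i, 0 < b i) (hr0 : 0 ≤ r) (hr1 : r < 1)
    (hstep : ∀ i, b (i + 1) ≤ r * b i) {u : ℝ} (hu : 0 < u) {N : ℕ} (hN : ∀ i < N, u ≤ b i) :
    ∑ i ∈ Finset.range N, (b i)⁻¹ ≤ u⁻¹ / (1 - r) := by
  have h1r : 0 < 1 - r := sub_pos.2 hr1
  cases N with
  | zero => simpa using div_nonneg (inv_nonneg.2 hu.le) h1r.le
  | succ N =>
    exact (sum_range_succ_inv_le_div_of_succ_le_mul hb hr0 hr1 hstep N).trans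
      (by gcongr; exact hN N N.lt_succ_self)

end GeometricDecay

section Halving

variable {a : ℕ → ℝ} {p : ℝ}

theorem inv_two_rpow_le_one_sub_half_mul (hp0 : 0 ≤ p) (hp1 : p ≤ 1) :
    (2⁻¹ : ℝ) ^ p ≤ 1 - p / 2 := by
  have bernoulli := rpow_one_add_le_one_add_mul_self (s := -2⁻¹) (by norm_num) hp0 hp1
  norm_num at bernoulli
  linarith

theorem div_one_sub_inv_two_rpow_le (hp0 : 0 < p) (hp1 : p ≤ 1) {x : ℝ} (hx : 0 ≤ x) :
    x / (1 - 2⁻¹ ^ p) ≤ 2 / p * x := by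
  have hr := inv_two_rpow_le_one_sub_half_mul hp0.le hp1
  rw [div_le_iff₀ (by linarith)]
  calc x = 2 / p * x * (p / 2) := by field_simp
    _ ≤ 2 / p * x * (1 - 2⁻¹ ^ p) := by gcongr; linarith

theorem rpow_succ_le_of_halving (ha : ∀ i, 0 < a i) (hhalf : ∀ i, a (i + 1) ≤ 2⁻¹ * a i)
    (hp : 0 ≤ p) (i : ℕ) : a (i + 1) ^ p ≤ 2⁻¹ ^ p * a i ^ p := by
  rw [← Real.mul_rpow (by norm_num) (ha i).le]
  exact Real.rpow_le_rpow (ha _).le (hhalf i) hp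

theorem summable_rpow_of_halving (ha : ∀ i, 0 < a i) (hhalf : ∀ i, a (i + 1) ≤ 2⁻¹ * a i)
    (hp : 0 < p) : Summable fun i => a i ^ p :=
  summable_of_succ_le_mul (fun i => (Real.rpow_pos_of_pos (ha i) p).le) (by positivity)
    (Real.rpow_lt_one (by norm_num) (by norm_num) hp) (rpow_succ_le_of_halving ha hhalf hp.le)

theorem tsum_rpow_add_le_of_halving (ha : ∀ i, 0 < a i) (hhalf : ∀ i, a (i + 1) ≤ 2⁻¹ * a i)
    (hp0 : 0 < p) (hp1 : p ≤ 1) (m : ℕ) : ∑' k, a (k + m) ^ p ≤ 2 / p * a m ^ p :=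
  (tsum_add_le_div_of_succ_le_mul (fun i => (Real.rpow_pos_of_pos (ha i) p).le) (by positivity)
    (Real.rpow_lt_one (by norm_num) (by norm_num) hp0) (rpow_succ_le_of_halving ha hhalf hp0.le)
    m).trans (div_one_sub_inv_two_rpow_le hp0 hp1 (Real.rpow_pos_of_pos (ha m) p).le)

theorem sum_range_inv_rpow_le_of_halving (ha : ∀ i, 0 < a i)
    (hhalf : ∀ i, a (i + 1) ≤ 2⁻¹ * a i) (hp0 : 0 < p) (hp1 : p ≤ 1) {t : ℝ} (ht : 0 < t)
    {N : ℕ} (hN : ∀ i < N, t ≤ a i) :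
    ∑ i ∈ Finset.range N, (a i ^ p)⁻¹ ≤ 2 / p * (t ^ p)⁻¹ :=
  (sum_range_inv_le_div_of_le (fun i => Real.rpow_pos_of_pos (ha i) p) (by positivity)
    (Real.rpow_lt_one (by norm_num) (by norm_num) hp0) (rpow_succ_le_of_halving ha hhalf hp0.le)
    (Real.rpow_pos_of_pos ht p) fun i hi => Real.rpow_le_rpow ht.le (hN i hi) hp0.le).trans
    (div_one_sub_inv_two_rpow_le hp0 hp1 (inv_nonneg.2 (Real.rpow_pos_of_pos ht p).le))

theorem exists_lt_of_halving (ha : ∀ i, 0 < a i) (hhalf : ∀ i, a (i + 1) ≤ 2⁻¹ * a i)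
    {t : ℝ} (ht : 0 < t) : ∃ N, a N < t ∧ ∀ i < N, t ≤ a i := by
  classical
  have hex : ∃ N, a N < t := by
    have hlim := (summable_rpow_of_halving ha hhalf one_pos).tendsto_atTop_zero
    simp only [Real.rpow_one] at hlim
    exact (hlim.eventually (gt_mem_nhds ht)).exists
  exact ⟨Nat.find hex, Nat.find_spec hex, fun i hi => not_lt.1 (Nat.find_min hex hi)⟩

theorem tsum_le_mul_rpow_of_halving (ha : ∀ i, 0 < a i)
    (hhalf : ∀ i, a (i + 1) ≤ 2⁻¹ * a i) {F : ℕ → ℝ} {C ι t : ℝ} (hι0 : 0 < ι) (hι1 : ι < 1)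
    (hC : 0 ≤ C) (ht : 0 < t) (hF0 : ∀ i, 0 ≤ F i) (hF : ∀ i, F i ≤ C * a i ^ ι)
    (hFt : ∀ i, F i ≤ C * a i ^ ι / a i * t) :
    ∑' i, F i ≤ 2 * C / (ι * (1 - ι)) * t ^ ι := by
  have hsum : Summable F :=
    .of_nonneg_of_le hF0 hF ((summable_rpow_of_halving ha hhalf hι0).mul_left C)
  have hinv : ∀ x : ℝ, 0 < x → x ^ ι / x = (x ^ (1 - ι))⁻¹ := fun x hx => by
    rw [Real.rpow_sub hx, Real.rpow_one, inv_div]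
  -- split at the first index with `a N < t`
  obtain ⟨N, hN, hNmin⟩ := exists_lt_of_halving ha hhalf ht
  have head : ∑ i ∈ Finset.range N, F i ≤ 2 * C / (1 - ι) * t ^ ι :=
    calc ∑ i ∈ Finset.range N, F i ≤ ∑ i ∈ Finset.range N, C * t * (a i ^ (1 - ι))⁻¹ :=
          Finset.sum_le_sum fun i _ => (hFt i).trans_eq (by rw [mul_div_assoc, hinv _ (ha i)]; ring)
      _ ≤ C * t * (2 / (1 - ι) * (t ^ (1 - ι))⁻¹) := by
          rw [← Finset.mul_sum]
          gcongr
          exact sum_range_inv_rpow_le_of_halving ha hhalf (by linarith) (by linarith) ht hNmin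
      _ = 2 * C / (1 - ι) * t ^ ι := by rw [← hinv t ht]; field_simp
  have tail : ∑' i, F (i + N) ≤ 2 * C / ι * t ^ ι :=
    calc ∑' i, F (i + N) ≤ ∑' i, C * a (i + N) ^ ι :=
          Summable.tsum_le_tsum (fun i => hF _) ((summable_nat_add_iff N).2 hsum)
            ((summable_nat_add_iff N).2 ((summable_rpow_of_halving ha hhalf hι0).mul_left C))
      _ ≤ C * (2 / ι * t ^ ι) := by
          rw [tsum_mul_left]
          gcongr
          exact (tsum_rpow_add_le_of_halving ha hhalf hι0 hι1.le N).trans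
            (by gcongr; exact (ha N).le)
      _ = 2 * C / ι * t ^ ι := by ring
  calc ∑' i, F i = ∑ i ∈ Finset.range N, F i + ∑' i, F (i + N) :=
        (hsum.sum_add_tsum_nat_add N).symm
    _ ≤ 2 * C / (1 - ι) * t ^ ι + 2 * C / ι * t ^ ι := add_le_add head tail
    _ = 2 * C / (ι * (1 - ι)) * t ^ ι := by
        have : 1 - ι ≠ 0 := by linarith
        field_simp
        ring

end Halving

def polystrip (n : ℕ) (w : ℝ) : Set (Fin n → ℂ) := {z | ∀ j, |(z j).im| < w}

theorem polystrip_mono {n : ℕ} {w w' : ℝ} (h : w ≤ w') : polystrip n w ⊆ polystrip n w' :=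
  fun _ hz j => (hz j).trans_le h

theorem ofReal_mem_polystrip {n : ℕ} {w : ℝ} (hw : 0 < w) (x : Fin n → ℝ) :
    (fun j => (x j : ℂ)) ∈ polystrip n w :=
  fun j => by simpa using hw

theorem norm_sub_le_of_polystrip {X : Type*} [NormedAddCommGroup X] [NormedSpace ℂ X] {n : ℕ}
    {F : (Fin n → ℂ) → X} {w M t : ℝ} (hw : 0 < w) (hF : DifferentiableOn ℂ F (polystrip n w))
    (hM : ∀ z ∈ polystrip n w, ‖F z‖ ≤ M) (x y : Fin n → ℝ) (ht : 0 < t)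
    (hxy : ∀ j, |x j - y j| ≤ t) :
    ‖F (fun j => (x j : ℂ)) - F (fun j => (y j : ℂ))‖ ≤ 2 * M / w * t := by
  have hdiam : ∀ z₁ ∈ polystrip n w, ∀ z₂ ∈ polystrip n w, ‖F z₁ - F z₂‖ ≤ 2 * M :=
    fun z₁ h₁ z₂ h₂ => (norm_sub_le _ _).trans (by linarith [hM z₁ h₁, hM z₂ h₂])
  have hx := ofReal_mem_polystrip hw x
  have hy := ofReal_mem_polystrip hw y
  rcases le_or_gt w t with hwt | htw
  · have hM0 : 0 ≤ M := (norm_nonneg _).trans (hM _ hx)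
    calc _ ≤ 2 * M := hdiam _ hx _ hy
      _ ≤ 2 * M / w * t := by
          rw [div_mul_eq_mul_div, le_div_iff₀ hw]
          gcongr
  · -- Schwarz lemma along the complex line through `y` and `x`
    let L : ℂ → Fin n → ℂ := fun ζ j => y j + ζ * (x j - y j)
    have hL : MapsTo L (ball 0 (w / t)) (polystrip n w) := by
      intro ζ hζ j
      calc |(L ζ j).im| = |ζ.im| * |x j - y j| := by
            simp [L, Complex.mul_im, ← Complex.ofReal_sub, abs_mul]
        _ ≤ ‖ζ‖ * t := mul_le_mul (Complex.abs_im_le_norm ζ) (hxy j) (abs_nonneg _) (norm_nonneg _)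
        _ < w / t * t := by gcongr; simpa using hζ
        _ = w := by field_simp
    have hφ : DifferentiableOn ℂ (F ∘ L) (ball 0 (w / t)) :=
      hF.comp (by fun_prop : Differentiable ℂ L).differentiableOn hL
    have hmaps : MapsTo (F ∘ L) (ball 0 (w / t)) (closedBall ((F ∘ L) 0) (2 * M)) :=
      fun ζ hζ => by
        rw [mem_closedBall, dist_eq_norm]
        exact hdiam _ (hL hζ) _ (hL (mem_ball_self (by positivity)))
    have hschwarz := Complex.dist_le_div_mul_dist_of_mapsTo_ball hφ hmaps (z := 1)
      (by simpa [one_lt_div ht] using htw)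
    have hL1 : L 1 = fun j => (x j : ℂ) := by ext j; simp [L]
    have hL0 : L 0 = fun j => (y j : ℂ) := by ext j; simp [L]
    simpa [hL1, hL0, dist_eq_norm, div_div_eq_mul_div, div_mul_eq_mul_div] using hschwarz

section Bernstein

variable {X : Type*} [NormedAddCommGroup X] {n : ℕ}
  {d : ℕ → (Fin n → ℂ) → X} {a : ℕ → ℝ} {c ι : ℝ}

theorem summable_of_norm_le_on_polystrip [CompleteSpace X] (ha : ∀ i, 0 < a i)
    (hhalf : ∀ i, a (i + 1) ≤ 2⁻¹ * a i) (hι0 : 0 < ι)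
    (hbd : ∀ i, ∀ z ∈ polystrip n (a i), ‖d i z‖ ≤ c * a i ^ ι) (x : Fin n → ℝ) :
    Summable fun i => d i (fun j => (x j : ℂ)) :=
  .of_norm_bounded ((summable_rpow_of_halving ha hhalf hι0).mul_left c)
    fun i => hbd i _ (ofReal_mem_polystrip (ha i) x)

theorem norm_tsum_le_of_norm_le_on_polystrip (ha : ∀ i, 0 < a i)
    (hhalf : ∀ i, a (i + 1) ≤ 2⁻¹ * a i) (hι0 : 0 < ι) (hι1 : ι ≤ 1) (hc : 0 ≤ c)
    (hbd : ∀ i, ∀ z ∈ polystrip n (a i), ‖d i z‖ ≤ c * a i ^ ι) (x : Fin n → ℝ) :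
    ‖∑' i, d i (fun j => (x j : ℂ))‖ ≤ 2 * c / ι * a 0 ^ ι := by
  have htail := tsum_rpow_add_le_of_halving ha hhalf hι0 hι1 0
  simp only [add_zero] at htail
  calc _ ≤ ∑' i, c * a i ^ ι :=
        tsum_of_norm_bounded ((summable_rpow_of_halving ha hhalf hι0).mul_left c).hasSum
          fun i => hbd i _ (ofReal_mem_polystrip (ha i) x)
    _ ≤ c * (2 / ι * a 0 ^ ι) := by rw [tsum_mul_left]; gcongr
    _ = 2 * c / ι * a 0 ^ ι := by ring

theorem norm_tsum_sub_tsum_le_of_polystrip [NormedSpace ℂ X] [CompleteSpace X] (ha : ∀ i, 0 < a i)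
    (hhalf : ∀ i, a (i + 1) ≤ 2⁻¹ * a i) (hι0 : 0 < ι) (hι1 : ι < 1) (hc : 0 ≤ c)
    (hd : ∀ i, DifferentiableOn ℂ (d i) (polystrip n (a i)))
    (hbd : ∀ i, ∀ z ∈ polystrip n (a i), ‖d i z‖ ≤ c * a i ^ ι) (x y : Fin n → ℝ) {t : ℝ}
    (ht : 0 < t) (hxy : ∀ j, |x j - y j| ≤ t) :
    ‖∑' i, d i (fun j => (x j : ℂ)) - ∑' i, d i (fun j => (y j : ℂ))‖ ≤
      4 * c / (ι * (1 - ι)) * t ^ ι := by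
  have hsum := summable_of_norm_le_on_polystrip ha hhalf hι0 hbd
  have hF : ∀ i, ‖d i (fun j => (x j : ℂ)) - d i (fun j => (y j : ℂ))‖ ≤ 2 * c * a i ^ ι :=
    fun i => (norm_sub_le _ _).trans (by
      linarith [hbd i _ (ofReal_mem_polystrip (ha i) x), hbd i _ (ofReal_mem_polystrip (ha i) y)])
  have hFt : ∀ i, ‖d i (fun j => (x j : ℂ)) - d i (fun j => (y j : ℂ))‖ ≤
      2 * c * a i ^ ι / a i * t := fun i =>
    (norm_sub_le_of_polystrip (ha i) (hd i) (hbd i) x y ht hxy).trans_eq (by ring)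
  rw [← (hsum x).tsum_sub (hsum y)]
  calc _ ≤ ∑' i, ‖d i (fun j => (x j : ℂ)) - d i (fun j => (y j : ℂ))‖ :=
        norm_tsum_le_tsum_norm (.of_nonneg_of_le (fun _ => norm_nonneg _) hF
          ((summable_rpow_of_halving ha hhalf hι0).mul_left _))
    _ ≤ 2 * (2 * c) / (ι * (1 - ι)) * t ^ ι :=
        tsum_le_mul_rpow_of_halving ha hhalf hι0 hι1 (by positivity) ht
          (fun _ => norm_nonneg _) hF hFt
    _ = 4 * c / (ι * (1 - ι)) * t ^ ι := by ring

end Bernstein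

section Widths

variable {σ : ℝ}

theorem rpow_three_halves_le_inv_two_mul {x : ℝ} (hx0 : 0 ≤ x) (hx : x ≤ 1 / 4) :
    x ^ (3 / 2 : ℝ) ≤ 2⁻¹ * x := by
  have hsqrt : √x ≤ 2⁻¹ := Real.sqrt_le_iff.2 ⟨by norm_num, by linarith⟩
  rw [show (3 / 2 : ℝ) = 1 / 2 + 1 by norm_num, Real.rpow_add' hx0 (by norm_num),
    Real.rpow_one, ← Real.sqrt_eq_rpow]
  gcongr

theorem rpow_three_halves_pow_le_self (hσ0 : 0 ≤ σ) (hσ1 : σ ≤ 1) (ν : ℕ) :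
    σ ^ ((3 / 2 : ℝ) ^ ν) ≤ σ :=
  Real.rpow_le_self_of_le_one hσ0 hσ1 (one_le_pow₀ (by norm_num))

theorem rpow_three_halves_pow_succ_le (hσ0 : 0 ≤ σ) (hσ : σ ≤ 1 / 4) (ν : ℕ) :
    σ ^ ((3 / 2 : ℝ) ^ (ν + 1)) ≤ 2⁻¹ * σ ^ ((3 / 2 : ℝ) ^ ν) := by
  rw [pow_succ, Real.rpow_mul hσ0]
  exact rpow_three_halves_le_inv_two_mul (Real.rpow_nonneg hσ0 _)
    ((rpow_three_halves_pow_le_self hσ0 (by linarith) ν).trans hσ)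

end Widths

theorem statement3_general (X : Type*) [NormedAddCommGroup X] [NormedSpace ℂ X] [CompleteSpace X]
    (n : ℕ) (ι c σ : ℝ)
    (hι0 : 0 < ι) (hι1 : ι < 1) (hc : 0 < c) (hσ0 : 0 < σ) (hσ : σ ≤ 1 / 4)
    (f : ℕ → (Fin n → ℂ) → X) (hf0 : f 0 = 0)
    (hol : ∀ ν : ℕ, 1 ≤ ν →
      DifferentiableOn ℂ (f ν) {z : Fin n → ℂ | ∀ j, |(z j).im| < σ ^ ((3 / 2 : ℝ) ^ ν)})
    (hbd : ∀ ν : ℕ, 1 ≤ ν → ∀ z : Fin n → ℂ, (∀ j, |(z j).im| < σ ^ ((3 / 2 : ℝ) ^ ν)) →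
      ‖f ν z - f (ν - 1) z‖ ≤ c * (σ ^ ((3 / 2 : ℝ) ^ ν)) ^ ι) :
    ∃ g : EuclideanSpace ℝ (Fin n) → X,
      (∀ x : EuclideanSpace ℝ (Fin n),
        Filter.Tendsto (fun ν => f ν (fun i => (x i : ℂ))) Filter.atTop (nhds (g x))) ∧
      (∀ x : EuclideanSpace ℝ (Fin n), ‖g x‖ ≤ 2 * c / ι * σ ^ ι) ∧
      (∀ x y : EuclideanSpace ℝ (Fin n), x ≠ y → dist x y ≤ 1 →
        ‖g x - g y‖ ≤ 4 * c / (ι * (1 - ι)) * dist x y ^ ι) := by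
  have hf : ∀ ν, DifferentiableOn ℂ (f ν) (polystrip n (σ ^ ((3 / 2 : ℝ) ^ ν))) := fun ν => by
    rcases Nat.eq_zero_or_pos ν with rfl | hν
    · rw [hf0]; exact differentiableOn_const 0
    · exact hol ν hν
  let a : ℕ → ℝ := fun i => σ ^ ((3 / 2 : ℝ) ^ (i + 1))
  let d : ℕ → (Fin n → ℂ) → X := fun i => f (i + 1) - f i
  have ha : ∀ i, 0 < a i := fun i => Real.rpow_pos_of_pos hσ0 _
  have hhalf : ∀ i, a (i + 1) ≤ 2⁻¹ * a i := fun i =>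
    rpow_three_halves_pow_succ_le hσ0.le hσ (i + 1)
  have hd : ∀ i, DifferentiableOn ℂ (d i) (polystrip n (a i)) := fun i =>
    (hf (i + 1)).sub ((hf i).mono (polystrip_mono
      (Real.rpow_le_rpow_of_exponent_ge hσ0 (by linarith) (pow_le_pow_right₀ (by norm_num)
        i.le_succ))))
  have hdbd : ∀ i, ∀ z ∈ polystrip n (a i), ‖d i z‖ ≤ c * a i ^ ι := fun i z hz => by
    simpa [d, a] using hbd (i + 1) (Nat.le_add_left 1 i) z hz
  refine ⟨fun x => ∑' i, d i (fun j => (x j : ℂ)), fun x => ?_, fun x => ?_,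
    fun x y hxy _ => ?_⟩
  · have hpartial := (summable_of_norm_le_on_polystrip ha hhalf hι0 hdbd x).hasSum.tendsto_sum_nat
    refine hpartial.congr fun ν => ?_
    simp only [d, Pi.sub_apply]
    rw [Finset.sum_range_sub (fun i => f i fun j => (x j : ℂ)), hf0, Pi.zero_apply, sub_zero]
  · refine (norm_tsum_le_of_norm_le_on_polystrip ha hhalf hι0 hι1.le hc.le hdbd x).trans ?_
    gcongr
    exact rpow_three_halves_pow_le_self hσ0.le (by linarith) 1
  · exact norm_tsum_sub_tsum_le_of_polystrip ha hhalf hι0 hι1 hc.le hd hdbd x y (dist_pos.2 hxy)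
      fun j => by simpa [Real.dist_eq] using PiLp.dist_apply_le x y j

/-- Core case `0 < ι < 1` of the converse approximation lemma, with the
explicit constants of the paper's appendix: the limit `f` of the `f_ν` on `ℝ^n` satisfies
`sup ‖f‖ ≤ (2c/ι)σ^ι` and the Hölder bound `‖f(x) − f(y)‖ ≤ (4c/(ι(1−ι)))|x−y|^ι` for
`0 < |x−y| ≤ 1` (Euclidean norm on `ℝ^n`). -/
theorem statement3 (X : Type*) [NormedAddCommGroup X] [NormedSpace ℂ X] [CompleteSpace X]
    (n : ℕ) (hn : 1 ≤ n) (ι c σ : ℝ)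
    (hι0 : 0 < ι) (hι1 : ι < 1) (hc : 0 < c) (hσ0 : 0 < σ) (hσ : σ ≤ 1 / 4)
    (f : ℕ → (Fin n → ℂ) → X) (hf0 : f 0 = 0)
    (hol : ∀ ν : ℕ, 1 ≤ ν →
      DifferentiableOn ℂ (f ν) {z : Fin n → ℂ | ∀ j, |(z j).im| < σ ^ ((3 / 2 : ℝ) ^ ν)})
    (hbd : ∀ ν : ℕ, 1 ≤ ν → ∀ z : Fin n → ℂ, (∀ j, |(z j).im| < σ ^ ((3 / 2 : ℝ) ^ ν)) →
      ‖f ν z - f (ν - 1) z‖ ≤ c * (σ ^ ((3 / 2 : ℝ) ^ ν)) ^ ι) :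
    ∃ g : EuclideanSpace ℝ (Fin n) → X,
      (∀ x : EuclideanSpace ℝ (Fin n),
        Filter.Tendsto (fun ν => f ν (fun i => (x i : ℂ))) Filter.atTop (nhds (g x))) ∧
      (∀ x : EuclideanSpace ℝ (Fin n), ‖g x‖ ≤ 2 * c / ι * σ ^ ι) ∧
      (∀ x y : EuclideanSpace ℝ (Fin n), x ≠ y → dist x y ≤ 1 →
        ‖g x - g y‖ ≤ 4 * c / (ι * (1 - ι)) * dist x y ^ ι) :=
  statement3_general X n ι c σ hι0 hι1 hc hσ0 hσ f hf0 hol hbd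
end

section
/- Let d ≥ 1 be an integer, and let α > 0, γ₁ > 0, γ₂ > 0, δ with 0 < δ < γ₂/24, and β > 9(2 + d/α)γ₁/(γ₂ − 24δ) be real numbers. For 0 < ε < 1 define ε_ν = ε^{(3/2)^ν}, K_ν = 8·ln(1/ε_ν)·ε_ν^{−3/(2β)}, and κ_ν = ε_ν^{1/(6(2+d/α))}. Then there exists ε* ∈ (0,1), depending only on d, α, γ₁, γ₂, δ and β, such that for all 0 < ε < ε*, ∑_{ν=0}^{∞} K_ν^{γ₁}·κ_ν^{γ₂} ≤ ε^{3δ/(2+d/α)}. -/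
/-!
With `y = ε_ν` and `A = 2 + d/α`, the `ν`-th term is `(8 log (1/y))^γ₁ y^a` with
`a = γ₂/(6A) - 3γ₁/(2β)`, and the condition on `β` says exactly that `a > η := 4δ/A`.
For small `y` the logarithm is absorbed by the surplus `y^(a - η)`, so the term is at most
`(ε^η)^((3/2)^ν) ≤ ε^η (ε^(η/2))^ν` by Bernoulli's inequality `(3/2)^ν ≥ 1 + ν/2`.
The geometric series sums to `ε^η / (1 - ε^(η/2)) = z^4 / (1 - z^2)` with `z = ε^(δ/A)`,
which is at most `z^3 = ε^(3δ/A)` once `z ≤ 1/2`.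
-/

open Real Filter Topology Set

lemma rpow_pow_le_mul_rpow_sub_one_pow {x q : ℝ} (hx0 : 0 < x) (hx1 : x ≤ 1) (hq : 1 ≤ q)
    (ν : ℕ) : x ^ (q ^ ν) ≤ x * (x ^ (q - 1)) ^ ν := by
  have bernoulli : 1 + ν * (q - 1) ≤ q ^ ν := by
    simpa using one_add_mul_le_pow (a := q - 1) (by linarith) ν
  calc x ^ (q ^ ν) ≤ x ^ (1 + ν * (q - 1)) := rpow_le_rpow_of_exponent_ge hx0 hx1 bernoulli
    _ = x * (x ^ (q - 1)) ^ ν := by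
      rw [rpow_add hx0, rpow_one, mul_comm (ν : ℝ), rpow_mul hx0.le, rpow_natCast]

lemma summable_and_tsum_le_of_le_rpow_pow {f : ℕ → ℝ} {x q : ℝ} (hx0 : 0 < x) (hx1 : x < 1)
    (hq : 1 < q) (hf0 : ∀ ν, 0 ≤ f ν) (hf : ∀ ν, f ν ≤ x ^ (q ^ ν)) :
    Summable f ∧ ∑' ν, f ν ≤ x / (1 - x ^ (q - 1)) := by
  have hr0 : 0 ≤ x ^ (q - 1) := by positivity
  have hr1 : x ^ (q - 1) < 1 := rpow_lt_one hx0.le hx1 (by linarith)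
  have hle : ∀ ν, f ν ≤ x * (x ^ (q - 1)) ^ ν := fun ν =>
    (hf ν).trans (rpow_pow_le_mul_rpow_sub_one_pow hx0 hx1.le hq.le ν)
  have hgeom := (summable_geometric_of_lt_one hr0 hr1).mul_left x
  have hsum : Summable f := hgeom.of_nonneg_of_le hf0 hle
  refine ⟨hsum, ?_⟩
  calc ∑' ν, f ν ≤ ∑' ν, x * (x ^ (q - 1)) ^ ν := hsum.tsum_le_tsum hle hgeom
    _ = x / (1 - x ^ (q - 1)) := by
      rw [tsum_mul_left, tsum_geometric_of_lt_one hr0 hr1, div_eq_mul_inv]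

lemma tendsto_log_one_div_rpow_mul_rpow_nhdsGT_zero (s : ℝ) {c : ℝ} (hc : 0 < c) :
    Tendsto (fun y : ℝ => log (1 / y) ^ s * y ^ c) (𝓝[>] 0) (𝓝 0) := by
  have hlog : Tendsto (fun y : ℝ => log (1 / y)) (𝓝[>] 0) atTop := by
    refine (tendsto_neg_atBot_atTop.comp tendsto_log_nhdsGT_zero).congr fun y => ?_
    simp
  refine ((tendsto_rpow_mul_exp_neg_mul_atTop_nhds_zero s c hc).comp hlog).congr' ?_
  filter_upwards [self_mem_nhdsWithin] with y (hy : 0 < y)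
  simp only [Function.comp_apply, one_div, log_inv, rpow_def_of_pos hy]
  ring_nf

lemma tendsto_rpow_nhdsGT_zero {c : ℝ} (hc : 0 < c) :
    Tendsto (fun y : ℝ => y ^ c) (𝓝[>] 0) (𝓝 0) := by
  simpa [zero_rpow hc.ne'] using
    ((continuousAt_rpow_const 0 c (Or.inr hc.le)).tendsto).mono_left nhdsWithin_le_nhds

lemma eventually_nonneg_and_le_rpow (k p r γ₁ γ₂ η : ℝ) (hk : 0 ≤ k)
    (hη : η < γ₂ * r - γ₁ * p) :
    ∀ᶠ y in 𝓝[>] 0, 0 ≤ (k * log (1 / y) * y ^ (-p)) ^ γ₁ * (y ^ r) ^ γ₂ ∧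
      (k * log (1 / y) * y ^ (-p)) ^ γ₁ * (y ^ r) ^ γ₂ ≤ y ^ η := by
  have hsmall : ∀ᶠ y in 𝓝[>] 0, k ^ γ₁ * (log (1 / y) ^ γ₁ * y ^ (γ₂ * r - γ₁ * p - η)) < 1 := by
    refine Tendsto.eventually_lt_const one_pos ?_
    simpa using (tendsto_log_one_div_rpow_mul_rpow_nhdsGT_zero γ₁ (sub_pos.mpr hη)).const_mul
      (k ^ γ₁)
  filter_upwards [hsmall, Ioo_mem_nhdsGT one_pos] with y hy ⟨hy0, hy1⟩
  have hlog : 0 ≤ log (1 / y) := log_nonneg (by rw [one_div]; exact one_le_inv₀ hy0 |>.mpr hy1.le)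
  have hfactor : (k * log (1 / y) * y ^ (-p)) ^ γ₁ * (y ^ r) ^ γ₂ =
      k ^ γ₁ * (log (1 / y) ^ γ₁ * y ^ (γ₂ * r - γ₁ * p - η)) * y ^ η := by
    rw [mul_rpow (by positivity) (by positivity), mul_rpow hk hlog, ← rpow_mul hy0.le,
      ← rpow_mul hy0.le, mul_assoc, mul_assoc, ← rpow_add hy0, mul_assoc, mul_assoc,
      ← rpow_add hy0]
    ring_nf
  refine ⟨by positivity, ?_⟩
  rw [hfactor]
  exact mul_le_of_le_one_left (by positivity) hy.le

lemma four_mul_div_lt_exponent {A γ₁ γ₂ δ β : ℝ} (hA : 0 < A) (hγ₁ : 0 < γ₁) (hδ : δ < γ₂ / 24)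
    (hβ : 9 * A * γ₁ / (γ₂ - 24 * δ) < β) :
    4 * (δ / A) < γ₂ * (1 / (6 * A)) - γ₁ * (3 / (2 * β)) := by
  have hgap : 0 < γ₂ - 24 * δ := by linarith
  rw [div_lt_iff₀ hgap] at hβ
  have hβ0 : 0 < β := by nlinarith [mul_pos hA hγ₁]
  rw [← sub_pos]
  have : γ₂ * (1 / (6 * A)) - γ₁ * (3 / (2 * β)) - 4 * (δ / A) =
      (β * (γ₂ - 24 * δ) - 9 * A * γ₁) / (6 * A * β) := by
    field_simp
    ring
  rw [this]
  exact div_pos (by linarith) (by positivity)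

lemma rpow_four_mul_div_le_rpow_three_mul {ε c : ℝ} (hε : 0 ≤ ε) (hc : ε ^ c ≤ 1 / 2) :
    ε ^ (4 * c) / (1 - (ε ^ (4 * c)) ^ ((3 / 2 : ℝ) - 1)) ≤ ε ^ (3 * c) := by
  set z := ε ^ c
  have hz : 0 ≤ z := by positivity
  have hpow : ∀ n : ℕ, ε ^ (n * c) = z ^ n := fun n => by
    rw [mul_comm, rpow_mul hε, rpow_natCast]
  have h4 : (ε ^ (4 * c)) ^ ((3 / 2 : ℝ) - 1) = z ^ 2 := by
    rw [← rpow_mul hε, show 4 * c * ((3 / 2 : ℝ) - 1) = (2 : ℕ) * c by norm_num; ring, hpow]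
  rw [h4, show (4 : ℝ) = (4 : ℕ) by norm_num, show (3 : ℝ) = (3 : ℕ) by norm_num, hpow, hpow,
    div_le_iff₀ (by nlinarith)]
  nlinarith [pow_nonneg hz 3]

theorem statement8_general (d : ℕ) (α γ₁ γ₂ δ β : ℝ)
    (hα : 0 < α) (hγ₁ : 0 < γ₁) (hδ0 : 0 < δ) (hδ : δ < γ₂ / 24)
    (hβ : 9 * (2 + (d : ℝ) / α) * γ₁ / (γ₂ - 24 * δ) < β) :
    ∃ εs : ℝ, 0 < εs ∧ εs < 1 ∧
      ∀ ε : ℝ, 0 < ε → ε < εs →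
        Summable (fun ν : ℕ =>
          (8 * Real.log (1 / ε ^ ((3 / 2 : ℝ) ^ ν)) *
              (ε ^ ((3 / 2 : ℝ) ^ ν)) ^ (-(3 / (2 * β)))) ^ γ₁ *
          ((ε ^ ((3 / 2 : ℝ) ^ ν)) ^ ((1 : ℝ) / (6 * (2 + (d : ℝ) / α)))) ^ γ₂) ∧
        ∑' ν : ℕ,
          (8 * Real.log (1 / ε ^ ((3 / 2 : ℝ) ^ ν)) *
              (ε ^ ((3 / 2 : ℝ) ^ ν)) ^ (-(3 / (2 * β)))) ^ γ₁ *
          ((ε ^ ((3 / 2 : ℝ) ^ ν)) ^ ((1 : ℝ) / (6 * (2 + (d : ℝ) / α)))) ^ γ₂ ≤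
          ε ^ (3 * δ / (2 + (d : ℝ) / α)) := by
  set A : ℝ := 2 + (d : ℝ) / α
  have hA : 0 < A := by positivity
  have hterm := eventually_nonneg_and_le_rpow 8 (3 / (2 * β)) (1 / (6 * A)) γ₁ γ₂ (4 * (δ / A))
    (by norm_num) (four_mul_div_lt_exponent hA hγ₁ hδ hβ)
  have hsmall : ∀ᶠ ε : ℝ in 𝓝[>] 0, ε ^ (δ / A) < 1 / 2 :=
    (tendsto_rpow_nhdsGT_zero (by positivity)).eventually_lt_const (by norm_num)
  obtain ⟨u, hu0, hu⟩ := mem_nhdsGT_iff_exists_Ioo_subset.mp (hterm.and hsmall)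
  refine ⟨min u (1 / 2), lt_min hu0 (by norm_num), by linarith [min_le_right u (1 / 2)],
    fun ε hε hεs => ?_⟩
  have hε1 : ε < 1 := by linarith [min_le_right u (1 / 2)]
  have hεu : ∀ ν : ℕ, ε ^ ((3 / 2 : ℝ) ^ ν) ∈ Ioo 0 u := fun ν =>
    ⟨by positivity, lt_of_le_of_lt
      (by simpa using rpow_le_rpow_of_exponent_ge hε hε1.le (one_le_pow₀ (by norm_num)))
      (hεs.trans_le (min_le_left _ _))⟩
  obtain ⟨hsum, htsum⟩ := summable_and_tsum_le_of_le_rpow_pow (x := ε ^ (4 * (δ / A)))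
    (by positivity) (rpow_lt_one hε.le hε1 (by positivity)) (by norm_num : (1 : ℝ) < 3 / 2)
    (fun ν => (hu (hεu ν)).1.1) fun ν => by
      rw [← rpow_mul hε.le (4 * (δ / A)), mul_comm (4 * (δ / A)), rpow_mul hε.le]
      exact (hu (hεu ν)).1.2
  refine ⟨hsum, htsum.trans ?_⟩
  rw [mul_div_assoc]
  exact rpow_four_mul_div_le_rpow_three_mul hε.le (hu ⟨hε, hεs.trans_le (min_le_left _ _)⟩).2.le

/-- (Measure estimate of Section 4.5.) With `ε_ν = ε^{(3/2)^ν}`,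
`K_ν = 8 ln(1/ε_ν) ε_ν^{−3/(2β)}` and `κ_ν = ε_ν^{1/(6(2+d/α))}`, if
`β > 9(2+d/α)γ₁/(γ₂−24δ)` with `0 < δ < γ₂/24`, then there is `ε* ∈ (0,1)`, depending only
on `d, α, γ₁, γ₂, δ, β`, such that `∑_{ν≥0} K_ν^{γ₁} κ_ν^{γ₂} ≤ ε^{3δ/(2+d/α)}` for all
`0 < ε < ε*`. -/
theorem statement8 (d : ℕ) (hd : 1 ≤ d) (α γ₁ γ₂ δ β : ℝ)
    (hα : 0 < α) (hγ₁ : 0 < γ₁) (hγ₂ : 0 < γ₂) (hδ0 : 0 < δ) (hδ : δ < γ₂ / 24)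
    (hβ : 9 * (2 + (d : ℝ) / α) * γ₁ / (γ₂ - 24 * δ) < β) :
    ∃ εs : ℝ, 0 < εs ∧ εs < 1 ∧
      ∀ ε : ℝ, 0 < ε → ε < εs →
        Summable (fun ν : ℕ =>
          (8 * Real.log (1 / ε ^ ((3 / 2 : ℝ) ^ ν)) *
              (ε ^ ((3 / 2 : ℝ) ^ ν)) ^ (-(3 / (2 * β)))) ^ γ₁ *
          ((ε ^ ((3 / 2 : ℝ) ^ ν)) ^ ((1 : ℝ) / (6 * (2 + (d : ℝ) / α)))) ^ γ₂) ∧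
        ∑' ν : ℕ,
          (8 * Real.log (1 / ε ^ ((3 / 2 : ℝ) ^ ν)) *
              (ε ^ ((3 / 2 : ℝ) ^ ν)) ^ (-(3 / (2 * β)))) ^ γ₁ *
          ((ε ^ ((3 / 2 : ℝ) ^ ν)) ^ ((1 : ℝ) / (6 * (2 + (d : ℝ) / α)))) ^ γ₂ ≤
          ε ^ (3 * δ / (2 + (d : ℝ) / α)) :=
  statement8_general d α γ₁ γ₂ δ β hα hγ₁ hδ0 hδ hβ
end
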